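/- arXiv:2202.00553 — 2 statements merged into one kernel-verified Lean document; each statement's English description precedes it below -/
import Mathlib

section
/- For any ρ₀ ∈ [−1,1], the sequence defined by ρ_{k+1} = r(ρ_k) with r(t) = (1/π)(√(1−t²) + tπ/2 + t·arcsin t) converges to 1 as k → ∞. -/
open Real Set Filter

/-- The ReLU correlation map. -/
noncomputable def rmap (t : ℝ) : ℝ :=
  (1 / π) * (Real.sqrt (1 - t ^ 2) + t * π / 2 + t * Real.arcsin t)

private noncomputable def Gfun (t : ℝ) : ℝ :=
  Real.sqrt (1 - t ^ 2) + t * Real.arcsin t - t * π / 2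

private lemma hasDerivAt_sqrt_aux (x : ℝ) (hx : x ∈ Ioo (-1 : ℝ) 1) :
    HasDerivAt (fun t : ℝ => Real.sqrt (1 - t ^ 2)) (-x / Real.sqrt (1 - x ^ 2)) x := by
  have hpos : 0 < 1 - x ^ 2 := by nlinarith [hx.1, hx.2]
  have h0 : HasDerivAt (fun t : ℝ => 1 - t ^ 2) (-(2 * x)) x := by
    simpa using ((hasDerivAt_pow 2 x).const_sub 1)
  have h1 := (Real.hasDerivAt_sqrt hpos.ne').comp x h0
  have hs : Real.sqrt (1 - x ^ 2) ≠ 0 := (Real.sqrt_pos.2 hpos).ne'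
  refine h1.congr_deriv ?_
  field_simp

private lemma hasDerivAt_mul_arcsin (x : ℝ) (hx : x ∈ Ioo (-1 : ℝ) 1) :
    HasDerivAt (fun t : ℝ => t * Real.arcsin t)
      (Real.arcsin x + x * (1 / Real.sqrt (1 - x ^ 2))) x := by
  have h1 : x ≠ -1 := ne_of_gt hx.1
  have h2 : x ≠ 1 := ne_of_lt hx.2
  have := (hasDerivAt_id x).mul (Real.hasDerivAt_arcsin h1 h2)
  refine this.congr_deriv ?_
  simp only [id_eq]
  ring

private lemma hasDerivAt_G (x : ℝ) (hx : x ∈ Ioo (-1 : ℝ) 1) :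
    HasDerivAt Gfun (Real.arcsin x - π / 2) x := by
  have hpos : 0 < 1 - x ^ 2 := by nlinarith [hx.1, hx.2]
  have hs : Real.sqrt (1 - x ^ 2) ≠ 0 := (Real.sqrt_pos.2 hpos).ne'
  have d3 : HasDerivAt (fun t : ℝ => t * π / 2) (π / 2) x := by
    simpa using ((hasDerivAt_id x).mul_const π).div_const 2
  have h := ((hasDerivAt_sqrt_aux x hx).add (hasDerivAt_mul_arcsin x hx)).sub d3
  have h0 : -x / Real.sqrt (1 - x ^ 2) + x * (1 / Real.sqrt (1 - x ^ 2)) = 0 := by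
    field_simp
    ring
  refine h.congr_deriv ?_
  linarith [h0]

private lemma hasDerivAt_rmap (x : ℝ) (hx : x ∈ Ioo (-1 : ℝ) 1) :
    HasDerivAt _root_.rmap ((1 / π) * (π / 2 + Real.arcsin x)) x := by
  have hpos : 0 < 1 - x ^ 2 := by nlinarith [hx.1, hx.2]
  have hs : Real.sqrt (1 - x ^ 2) ≠ 0 := (Real.sqrt_pos.2 hpos).ne'
  have d3 : HasDerivAt (fun t : ℝ => t * π / 2) (π / 2) x := by
    simpa using ((hasDerivAt_id x).mul_const π).div_const 2
  have h := (((hasDerivAt_sqrt_aux x hx).add d3).add (hasDerivAt_mul_arcsin x hx)).const_mul (1 / π)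
  have h0 : -x / Real.sqrt (1 - x ^ 2) + x * (1 / Real.sqrt (1 - x ^ 2)) = 0 := by
    field_simp
    ring
  refine h.congr_deriv ?_
  have : -x / Real.sqrt (1 - x ^ 2) + π / 2 + (Real.arcsin x + x * (1 / Real.sqrt (1 - x ^ 2)))
      = π / 2 + Real.arcsin x := by linarith [h0]
  rw [this]

private lemma rmap_continuous : Continuous _root_.rmap := by
  apply continuous_const.mul
  apply Continuous.add
  · apply Continuous.add
    · exact (continuous_const.sub (continuous_pow 2)).sqrt
    · exact (continuous_id.mul continuous_const).div_const 2
  · exact continuous_id.mul Real.continuous_arcsin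

private lemma G_continuous : Continuous Gfun := by
  apply Continuous.sub
  · exact ((continuous_const.sub (continuous_pow 2)).sqrt).add
      (continuous_id.mul Real.continuous_arcsin)
  · exact (continuous_id.mul continuous_const).div_const 2

private lemma G_strictAnti : StrictAntiOn Gfun (Icc (-1 : ℝ) 1) := by
  apply strictAntiOn_of_deriv_neg (convex_Icc _ _) G_continuous.continuousOn
  intro x hx
  rw [interior_Icc] at hx
  rw [(hasDerivAt_G x hx).deriv]
  have : Real.arcsin x < π / 2 := Real.arcsin_lt_pi_div_two.2 hx.2
  linarith

private lemma G_one : Gfun 1 = 0 := by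
  unfold Gfun
  rw [show (1 : ℝ) - 1 ^ 2 = 0 by norm_num, Real.sqrt_zero, Real.arcsin_one]
  ring

private lemma rmap_sub_self (t : ℝ) : _root_.rmap t - t = (1 / π) * Gfun t := by
  have hπ : (π : ℝ) ≠ 0 := Real.pi_ne_zero
  unfold _root_.rmap Gfun
  field_simp
  ring

private lemma self_le_rmap {t : ℝ} (ht : t ∈ Icc (-1 : ℝ) 1) : t ≤ _root_.rmap t := by
  have hG : 0 ≤ Gfun t := by
    rcases eq_or_lt_of_le ht.2 with h | h
    · rw [h, G_one]
    · have := G_strictAnti ht (by constructor <;> norm_num) h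
      rw [G_one] at this
      linarith
  have h := rmap_sub_self t
  have hπ : 0 < (1 / π) := by positivity
  nlinarith

private lemma self_lt_rmap {t : ℝ} (ht : t ∈ Icc (-1 : ℝ) 1) (h1 : t < 1) :
    t < _root_.rmap t := by
  have hG : 0 < Gfun t := by
    have := G_strictAnti ht (by constructor <;> norm_num) h1
    rw [G_one] at this
    linarith
  have h := rmap_sub_self t
  have hπ : 0 < (1 / π) := by positivity
  nlinarith

private lemma rmap_monotoneOn : MonotoneOn _root_.rmap (Icc (-1 : ℝ) 1) := by
  apply monotoneOn_of_deriv_nonneg (convex_Icc _ _) rmap_continuous.continuousOn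
  · intro x hx
    rw [interior_Icc] at hx
    exact (hasDerivAt_rmap x hx).differentiableAt.differentiableWithinAt
  · intro x hx
    rw [interior_Icc] at hx
    rw [(hasDerivAt_rmap x hx).deriv]
    have h1 : -(π / 2) ≤ Real.arcsin x := Real.neg_pi_div_two_le_arcsin x
    have hπ : 0 < (1 / π) := by positivity
    nlinarith

private lemma rmap_one : _root_.rmap 1 = 1 := by
  have hπ : (π : ℝ) ≠ 0 := Real.pi_ne_zero
  unfold _root_.rmap
  rw [show (1 : ℝ) - 1 ^ 2 = 0 by norm_num, Real.sqrt_zero, Real.arcsin_one]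
  field_simp
  ring

private lemma rmap_neg_one : _root_.rmap (-1) = 0 := by
  unfold _root_.rmap
  rw [show (1 : ℝ) - (-1) ^ 2 = 0 by norm_num, Real.sqrt_zero, Real.arcsin_neg,
    Real.arcsin_one]
  ring

private lemma rmap_mem {t : ℝ} (ht : t ∈ Icc (-1 : ℝ) 1) :
    _root_.rmap t ∈ Icc (-1 : ℝ) 1 := by
  constructor
  · have := rmap_monotoneOn (show (-1 : ℝ) ∈ Icc (-1 : ℝ) 1 by constructor <;> norm_num) ht ht.1
    rw [rmap_neg_one] at this
    linarith
  · have := rmap_monotoneOn ht (show (1 : ℝ) ∈ Icc (-1 : ℝ) 1 by constructor <;> norm_num) ht.2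
    rwa [rmap_one] at this

/-- For any `ρ₀ ∈ [-1,1]`, the iterates `ρ_{k+1} = r(ρ_k)` converge to `1`. -/
theorem rmap_iterates_tendsto_one (ρ₀ : ℝ) (hρ₀ : ρ₀ ∈ Icc (-1 : ℝ) 1) :
    Tendsto (fun k => rmap^[k] ρ₀) atTop (nhds 1) := by
  set a : ℕ → ℝ := fun k => _root_.rmap^[k] ρ₀ with ha_def
  have hsucc : ∀ k, a (k + 1) = _root_.rmap (a k) := by
    intro k
    simp [ha_def, Function.iterate_succ_apply']
  have hmem : ∀ k, a k ∈ Icc (-1 : ℝ) 1 := by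
    intro k
    induction k with
    | zero => simpa [ha_def] using hρ₀
    | succ n ih => rw [hsucc n]; exact rmap_mem ih
  have hmono : Monotone a :=
    monotone_nat_of_le_succ fun k => by rw [hsucc k]; exact self_le_rmap (hmem k)
  have hbdd : BddAbove (range a) := ⟨1, by rintro x ⟨k, rfl⟩; exact (hmem k).2⟩
  have htend : Tendsto a atTop (nhds (⨆ k, a k)) := tendsto_atTop_ciSup hmono hbdd
  set L := ⨆ k, a k with hL_def
  have hL1 : L ≤ 1 := ciSup_le fun k => (hmem k).2
  have hLm1 : -1 ≤ L := le_trans (hmem 0).1 (le_ciSup hbdd 0)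
  have hfix : _root_.rmap L = L := by
    have h1 : Tendsto (fun k => a (k + 1)) atTop (nhds L) :=
      htend.comp (tendsto_add_atTop_nat 1)
    have h2 : Tendsto (fun k => _root_.rmap (a k)) atTop (nhds (_root_.rmap L)) :=
      (rmap_continuous.tendsto L).comp htend
    have h3 : (fun k => a (k + 1)) = fun k => _root_.rmap (a k) := funext hsucc
    rw [h3] at h1
    exact tendsto_nhds_unique h2 h1
  have hLeq : L = 1 := by
    by_contra h
    have hlt : L < 1 := lt_of_le_of_ne hL1 h
    have := self_lt_rmap ⟨hLm1, hL1⟩ hlt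
    rw [hfix] at this
    exact lt_irrefl _ this
  rw [← hLeq]
  exact htend
end

section
/- Let X_1,…,X_{L−1} be independent random variables with X_ℓ = (σ²/n)·∑_{i=1}^n φ²(U_i^ℓ) where U_i^ℓ are i.i.d. standard Gaussians and φ is ReLU. Then E[∏_{ℓ=1}^{L−1} X_ℓ] = (σ²/2)^{L−1} and E[∏_{ℓ=1}^{L−1} X_ℓ²] = (σ²/2)^{2(L−1)}·(1 + 5/n)^{L−1}. -/
open MeasureTheory ProbabilityTheory Real Finset

noncomputable def relu (x : ℝ) : ℝ := max x 0

noncomputable def stdGaussian : Measure ℝ := gaussianReal 0 1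

instance : IsProbabilityMeasure stdGaussian :=
  inferInstanceAs (IsProbabilityMeasure (gaussianReal 0 1))

lemma stdGaussian_eq :
    _root_.stdGaussian = volume.withDensity (fun x => ((gaussianPDFReal 0 1 x).toNNReal : ENNReal)) :=
  gaussianReal_of_var_ne_zero 0 one_ne_zero

lemma integral_stdGaussian (g : ℝ → ℝ) :
    ∫ x, g x ∂stdGaussian = ∫ x, gaussianPDFReal 0 1 x * g x := by
  rw [stdGaussian_eq,
    integral_withDensity_eq_integral_smul
      ((measurable_gaussianPDFReal 0 1).real_toNNReal) g]
  refine integral_congr_ae (ae_of_all _ fun x => ?_)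
  simp [NNReal.smul_def, Real.coe_toNNReal _ (gaussianPDFReal_nonneg 0 1 x)]

lemma integrable_stdGaussian_iff (g : ℝ → ℝ) :
    Integrable g stdGaussian ↔ Integrable (fun x => gaussianPDFReal 0 1 x * g x) volume := by
  rw [stdGaussian_eq,
    integrable_withDensity_iff_integrable_smul
      ((measurable_gaussianPDFReal 0 1).real_toNNReal)]
  constructor <;> intro h <;> refine h.congr (ae_of_all _ fun x => ?_) <;>
    simp [NNReal.smul_def, Real.coe_toNNReal _ (gaussianPDFReal_nonneg 0 1 x)]

lemma relu_eq_zero {x : ℝ} (hx : x ≤ 0) : relu x = 0 := max_eq_right hx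

lemma relu_eq_self {x : ℝ} (hx : 0 ≤ x) : relu x = x := max_eq_left hx

lemma integrable_pdf_mul_relu_pow (m : ℕ) (hm : m ≠ 0) :
    Integrable (fun x => gaussianPDFReal 0 1 x * relu x ^ m) volume := by
  rw [← integrableOn_univ, ← Set.Iic_union_Ioi (a := (0:ℝ)),
    integrableOn_union]
  constructor
  · refine (integrableOn_zero (ε' := ℝ)).congr_fun (fun x hx => ?_) measurableSet_Iic
    simp [relu_eq_zero (Set.mem_Iic.mp hx), zero_pow hm]
  · have base : IntegrableOn (fun x : ℝ => x ^ ((m : ℝ)) * Real.exp (-(1/2 : ℝ) * x ^ 2))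
        (Set.Ioi 0) volume :=
      integrableOn_rpow_mul_exp_neg_mul_sq (by norm_num) (lt_of_lt_of_le neg_one_lt_zero (Nat.cast_nonneg m))
    have : IntegrableOn (fun x : ℝ =>
        (√(2 * π))⁻¹ * (x ^ ((m : ℝ)) * Real.exp (-(1/2 : ℝ) * x ^ 2))) (Set.Ioi 0) volume :=
      base.const_mul _
    refine this.congr_fun (fun x hx => ?_) measurableSet_Ioi
    have hx' : (0:ℝ) < x := hx
    rw [gaussianPDFReal, relu_eq_self hx'.le, ← Real.rpow_natCast x m]
    push_cast
    ring_nf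

lemma integral_relu_pow (m : ℕ) (hm : m ≠ 0) :
    ∫ x, relu x ^ m ∂stdGaussian
      = (√(2 * π))⁻¹ * ((1/2 : ℝ) ^ (-((m : ℝ) + 1) / 2) * (1 / 2) * Real.Gamma (((m : ℝ) + 1) / 2)) := by
  rw [integral_stdGaussian]
  rw [← setIntegral_eq_integral_of_forall_compl_eq_zero
      (s := Set.Ioi (0:ℝ)) (fun x hx => by
        simp [relu_eq_zero (le_of_not_gt (fun h => hx h)), zero_pow hm])]
  have : ∀ x ∈ Set.Ioi (0:ℝ), gaussianPDFReal 0 1 x * relu x ^ m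
      = (√(2 * π))⁻¹ * (x ^ ((m : ℝ)) * Real.exp (-(1/2 : ℝ) * x ^ ((2:ℝ)))) := by
    intro x hx
    have hx' : (0:ℝ) < x := hx
    rw [gaussianPDFReal, relu_eq_self hx'.le, ← Real.rpow_natCast x m,
      Real.rpow_two, ← Real.rpow_natCast x 2]
    push_cast
    ring_nf
    rw [mul_right_comm]
    norm_cast
  rw [setIntegral_congr_fun measurableSet_Ioi this, integral_const_mul,
    integral_rpow_mul_exp_neg_mul_rpow (by norm_num)
      (lt_of_lt_of_le neg_one_lt_zero (Nat.cast_nonneg m)) (by norm_num)]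

lemma sqrt_two_pi : √(2 * π) = √2 * √π := Real.sqrt_mul (by norm_num) _

lemma rpow_half_32 : (1/2 : ℝ) ^ (-(3:ℝ) / 2) = 2 * √2 := by
  rw [show (-(3:ℝ)/2) = -(1 + 1/2) by norm_num, one_div, Real.inv_rpow (by norm_num),
    Real.rpow_neg (by norm_num), inv_inv, Real.rpow_add (by norm_num), Real.rpow_one,
    Real.sqrt_eq_rpow]
  norm_num

lemma rpow_half_52 : (1/2 : ℝ) ^ (-(5:ℝ) / 2) = 4 * √2 := by
  rw [show (-(5:ℝ)/2) = -(2 + 1/2) by norm_num, one_div, Real.inv_rpow (by norm_num),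
    Real.rpow_neg (by norm_num), inv_inv, Real.rpow_add (by norm_num),
    Real.sqrt_eq_rpow, show ((2:ℝ) = ((2:ℕ):ℝ)) by norm_num, Real.rpow_natCast]
  norm_num

lemma Gamma_32 : Real.Gamma (3/2) = √π / 2 := by
  have h := Real.Gamma_add_one (by norm_num : (1/2:ℝ) ≠ 0)
  rw [show (1/2:ℝ)+1 = 3/2 by norm_num] at h
  rw [h, Real.Gamma_one_half_eq]; ring

lemma Gamma_52 : Real.Gamma (5/2) = 3 * √π / 4 := by
  have h := Real.Gamma_add_one (by norm_num : (3/2:ℝ) ≠ 0)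
  rw [show (3/2:ℝ)+1 = 5/2 by norm_num] at h
  rw [h, Gamma_32]; ring

lemma integral_relu_sq : ∫ x, relu x ^ 2 ∂stdGaussian = 1/2 := by
  rw [integral_relu_pow 2 two_ne_zero]
  have s2 : √2 * √2 = 2 := Real.mul_self_sqrt (by norm_num)
  have sπ : √π * √π = π := Real.mul_self_sqrt Real.pi_pos.le
  have h2 : (0:ℝ) < √2 := Real.sqrt_pos.mpr (by norm_num)
  have hπ : (0:ℝ) < √π := Real.sqrt_pos.mpr Real.pi_pos
  rw [show (-(((2:ℕ):ℝ) + 1) / 2) = -(3:ℝ)/2 by norm_num,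
    show ((((2:ℕ):ℝ) + 1) / 2) = 3/2 by norm_num,
    rpow_half_32, Gamma_32, sqrt_two_pi]
  field_simp

lemma integral_relu_four : ∫ x, relu x ^ 4 ∂stdGaussian = 3/2 := by
  rw [integral_relu_pow 4 (by norm_num)]
  have s2 : √2 * √2 = 2 := Real.mul_self_sqrt (by norm_num)
  have sπ : √π * √π = π := Real.mul_self_sqrt Real.pi_pos.le
  have h2 : (0:ℝ) < √2 := Real.sqrt_pos.mpr (by norm_num)
  have hπ : (0:ℝ) < √π := Real.sqrt_pos.mpr Real.pi_pos
  rw [show (-(((4:ℕ):ℝ) + 1) / 2) = -(5:ℝ)/2 by norm_num,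
    show ((((4:ℕ):ℝ) + 1) / 2) = 5/2 by norm_num,
    rpow_half_52, Gamma_52, sqrt_two_pi]
  field_simp

lemma integrable_relu_pow (m : ℕ) : Integrable (fun x => relu x ^ m) stdGaussian := by
  rcases Nat.eq_zero_or_pos m with rfl | hm
  · simpa using integrable_const (1:ℝ)
  · exact (integrable_stdGaussian_iff _).mpr (integrable_pdf_mul_relu_pow m hm.ne')

lemma integral_pi_prod {ι : Type*} [Fintype ι] (f : ι → ℝ → ℝ) :
    ∫ x : ι → ℝ, ∏ i, f i (x i) ∂(Measure.pi fun _ => stdGaussian)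
      = ∏ i, ∫ x, f i x ∂stdGaussian := by
  letI : MeasureSpace ℝ := ⟨stdGaussian⟩
  haveI : SigmaFinite (volume : Measure ℝ) :=
    inferInstanceAs (SigmaFinite stdGaussian)
  exact MeasureTheory.integral_fintype_prod_eq_prod f

lemma integrable_pi_prod {ι : Type*} [Fintype ι] (f : ι → ℝ → ℝ)
    (hf : ∀ i, Integrable (f i) stdGaussian) :
    Integrable (fun x : ι → ℝ => ∏ i, f i (x i)) (Measure.pi fun _ => stdGaussian) := by
  letI : MeasureSpace ℝ := ⟨stdGaussian⟩
  haveI : SigmaFinite (volume : Measure ℝ) :=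
    inferInstanceAs (SigmaFinite stdGaussian)
  exact MeasureTheory.Integrable.fintype_prod hf

lemma integrable_ite_relu (c : ℝ) (P : Prop) [Decidable P] :
    Integrable (fun x => if P then c * relu x ^ 2 else 1) stdGaussian := by
  split_ifs with h
  · exact (integrable_relu_pow 2).const_mul c
  · exact integrable_const 1

lemma integral_ite_relu (c : ℝ) (P : Prop) [Decidable P] :
    ∫ x, (if P then c * relu x ^ 2 else 1) ∂stdGaussian = if P then c * (1/2) else 1 := by
  split_ifs with h
  · rw [integral_const_mul, integral_relu_sq]
  · simp

lemma integrable_ite_relu2 (c : ℝ) (P Q : Prop) [Decidable P] [Decidable Q] :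
    Integrable (fun x =>
      (if P then c * relu x ^ 2 else 1) * (if Q then relu x ^ 2 else 1)) stdGaussian := by
  split_ifs with h1 h2 h3
  · exact ((integrable_relu_pow 4).const_mul c).congr (ae_of_all _ fun x => by ring)
  · simpa using (integrable_relu_pow 2).const_mul c
  · simpa using integrable_relu_pow 2
  · simpa using integrable_const (1:ℝ)

lemma integral_ite_relu2 (c : ℝ) (P Q : Prop) [Decidable P] [Decidable Q] :
    ∫ x, (if P then c * relu x ^ 2 else 1) * (if Q then relu x ^ 2 else 1) ∂stdGaussian
      = if P then (if Q then c * (3/2) else c * (1/2)) else (if Q then (1/2 : ℝ) else 1) := by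
  split_ifs with h1 h2 h3
  · have : (fun x => (c * relu x ^ 2) * (relu x ^ 2)) = fun x => c * relu x ^ 4 :=
      funext fun x => by ring
    rw [this, integral_const_mul, integral_relu_four]
  · simpa using integral_ite_relu c True
  · simpa using integral_ite_relu 1 True
  · simp

lemma prod_ite_pair {N : ℕ} (c : ℝ) (a b : Fin N) :
    ∏ i : Fin N, (if i = a then (if i = b then c * (3/2:ℝ) else c * (1/2))
        else (if i = b then (1/2:ℝ) else 1))
      = c * (if a = b then (3/2:ℝ) else 1/4) := by
  by_cases hab : a = b
  · subst hab
    have h : ∀ i ∈ Finset.univ, (if i = a then (if i = a then c * (3/2:ℝ) else c * (1/2))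
        else (if i = a then (1/2:ℝ) else 1)) = (if i = a then c * (3/2:ℝ) else 1) :=
      fun i _ => by by_cases h : i = a <;> simp [h]
    rw [Finset.prod_congr rfl h]
    simp [Finset.prod_ite_eq']
  · have h : ∀ i ∈ Finset.univ, (if i = a then (if i = b then c * (3/2:ℝ) else c * (1/2))
        else (if i = b then (1/2:ℝ) else 1))
        = (if i = a then c * (1/2:ℝ) else 1) * (if i = b then (1/2:ℝ) else 1) := by
      intro i _
      have hba : ¬ b = a := fun h => hab h.symm
      by_cases h1 : i = a
      · subst h1; simp [hab]
      · by_cases h2 : i = b <;> simp [h1, h2, hba]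
    rw [Finset.prod_congr rfl h, Finset.prod_mul_distrib]
    simp [Finset.prod_ite_eq', hab]
    ring

lemma sum_pair (N : ℕ) (c : ℝ) :
    ∑ q : Fin N × Fin N, (c * (if q.1 = q.2 then (3/2:ℝ) else 1/4))
      = c * ((N:ℝ) * ((N:ℝ) * (1/4) + 5/4)) := by
  rw [← Finset.mul_sum]
  congr 1
  rw [Fintype.sum_prod_type]
  have key : ∀ i : Fin N, ∑ j : Fin N, (if i = j then (3/2:ℝ) else 1/4)
      = (N:ℝ) * (1/4) + 5/4 := by
    intro i
    have h : ∀ j ∈ Finset.univ, (if i = j then (3/2:ℝ) else 1/4)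
        = (1/4:ℝ) + (if i = j then (5/4:ℝ) else 0) := by
      intro j _
      by_cases h : i = j <;> simp [h] <;> norm_num
    rw [Finset.sum_congr rfl h, Finset.sum_add_distrib, Finset.sum_const, Finset.sum_ite_eq]
    simp [Finset.card_univ, nsmul_eq_mul]
  have h2 : ∀ (q : Fin N × Fin N), (if q.1 = q.2 then (3/2:ℝ) else 1/4)
      = if q.1 = q.2 then (3/2:ℝ) else 1/4 := fun _ => rfl
  calc (∑ i : Fin N, ∑ j : Fin N, if (i, j).1 = (i, j).2 then (3/2:ℝ) else 1/4)
      = ∑ i : Fin N, ((N:ℝ) * (1/4) + 5/4) := by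
        exact Finset.sum_congr rfl fun i _ => key i
    _ = (N:ℝ) * ((N:ℝ) * (1/4) + 5/4) := by
        rw [Finset.sum_const, Finset.card_univ, nsmul_eq_mul, Fintype.card_fin]

/-- For independent layerwise ratios `X_ℓ = (σ²/n)·∑_{i=1}^n φ²(U_i^ℓ)` built from i.i.d.
standard Gaussians `U_i^ℓ`, one has `E[∏ X_ℓ] = (σ²/2)^{L−1}` and
`E[∏ X_ℓ²] = (σ²/2)^{2(L−1)}·(1 + 5/n)^{L−1}`. -/
theorem product_of_norm_ratios (σ : ℝ) (hσ : 0 < σ) (n : ℕ) (hn : 0 < n) (L : ℕ) (hL : 1 ≤ L) :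
    (∫ ω : (Fin (L - 1) × Fin n) → ℝ,
        ∏ ℓ : Fin (L - 1), ((σ ^ 2 / (n : ℝ)) * ∑ i : Fin n, (relu (ω (ℓ, i))) ^ 2)
        ∂(Measure.pi fun _ : Fin (L - 1) × Fin n => stdGaussian))
      = (σ ^ 2 / 2) ^ (L - 1) ∧
    (∫ ω : (Fin (L - 1) × Fin n) → ℝ,
        ∏ ℓ : Fin (L - 1), ((σ ^ 2 / (n : ℝ)) * ∑ i : Fin n, (relu (ω (ℓ, i))) ^ 2) ^ 2
        ∂(Measure.pi fun _ : Fin (L - 1) × Fin n => stdGaussian))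
      = (σ ^ 2 / 2) ^ (2 * (L - 1)) * (1 + 5 / (n : ℝ)) ^ (L - 1) := by
  have hne : (n:ℝ) ≠ 0 := Nat.cast_ne_zero.mpr hn.ne'
  set c : ℝ := σ ^ 2 / (n : ℝ) with hc
  constructor
  · have hexp : (fun ω : (Fin (L - 1) × Fin n) → ℝ =>
        ∏ ℓ : Fin (L - 1), (c * ∑ i : Fin n, (relu (ω (ℓ, i))) ^ 2))
        = fun ω => ∑ g : Fin (L - 1) → Fin n, ∏ p : Fin (L - 1) × Fin n,
            (fun x => if p.2 = g p.1 then c * relu x ^ 2 else 1) (ω p) := by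
      funext ω
      simp_rw [Finset.mul_sum]
      rw [Finset.prod_univ_sum]
      refine Finset.sum_congr (by simp [Fintype.piFinset_univ]) fun g _ => ?_
      rw [Fintype.prod_prod_type]
      simp [Finset.prod_ite_eq']
    rw [hexp, integral_finset_sum _
      (fun g _ => integrable_pi_prod _ (fun p => integrable_ite_relu _ _))]
    have hval : ∀ g : Fin (L - 1) → Fin n,
        (∫ ω : (Fin (L - 1) × Fin n) → ℝ, ∏ p : Fin (L - 1) × Fin n,
          (fun x => if p.2 = g p.1 then c * relu x ^ 2 else 1) (ω p)
          ∂(Measure.pi fun _ => stdGaussian))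
        = (c * (1/2)) ^ (L - 1) := by
      intro g
      refine (integral_pi_prod
        (fun (p : Fin (L - 1) × Fin n) x => if p.2 = g p.1 then c * relu x ^ 2 else 1)).trans ?_
      rw [Finset.prod_congr rfl (fun p _ => integral_ite_relu c (p.2 = g p.1))]
      rw [Fintype.prod_prod_type]
      simp [Finset.prod_ite_eq']
    rw [Finset.sum_congr rfl (fun g _ => hval g), Finset.sum_const, Finset.card_univ,
      nsmul_eq_mul, Fintype.card_fun, Fintype.card_fin, Fintype.card_fin]
    push_cast
    rw [← mul_pow]
    congr 1
    rw [hc]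
    field_simp
  · have hexp : (fun ω : (Fin (L - 1) × Fin n) → ℝ =>
        ∏ ℓ : Fin (L - 1), (c * ∑ i : Fin n, (relu (ω (ℓ, i))) ^ 2) ^ 2)
        = fun ω => ∑ g : Fin (L - 1) → Fin n × Fin n, ∏ p : Fin (L - 1) × Fin n,
            (fun x => (if p.2 = (g p.1).1 then c ^ 2 * relu x ^ 2 else 1)
              * (if p.2 = (g p.1).2 then relu x ^ 2 else 1)) (ω p) := by
      funext ω
      have hfac : ∀ ℓ : Fin (L - 1), (c * ∑ i : Fin n, (relu (ω (ℓ, i))) ^ 2) ^ 2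
          = ∑ q : Fin n × Fin n,
              (c ^ 2 * (relu (ω (ℓ, q.1)) ^ 2 * relu (ω (ℓ, q.2)) ^ 2)) := by
        intro ℓ
        rw [mul_pow, sq (∑ i : Fin n, (relu (ω (ℓ, i))) ^ 2), Finset.sum_mul_sum,
          Fintype.sum_prod_type]
        simp_rw [Finset.mul_sum]
      rw [Finset.prod_congr rfl (fun ℓ _ => hfac ℓ), Finset.prod_univ_sum]
      refine Finset.sum_congr (by simp [Fintype.piFinset_univ]) fun g _ => ?_
      rw [Fintype.prod_prod_type]
      refine Finset.prod_congr rfl fun ℓ _ => ?_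
      rw [Finset.prod_mul_distrib]
      simp [Finset.prod_ite_eq']
      ring
    rw [hexp, integral_finset_sum _
      (fun g _ => integrable_pi_prod _ (fun p => integrable_ite_relu2 _ _ _))]
    have hval : ∀ g : Fin (L - 1) → Fin n × Fin n,
        (∫ ω : (Fin (L - 1) × Fin n) → ℝ, ∏ p : Fin (L - 1) × Fin n,
          (fun x => (if p.2 = (g p.1).1 then c ^ 2 * relu x ^ 2 else 1)
            * (if p.2 = (g p.1).2 then relu x ^ 2 else 1)) (ω p)
          ∂(Measure.pi fun _ => stdGaussian))
        = ∏ ℓ : Fin (L - 1), (c ^ 2 * (if (g ℓ).1 = (g ℓ).2 then (3/2:ℝ) else 1/4)) := by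
      intro g
      refine (integral_pi_prod
        (fun (p : Fin (L - 1) × Fin n) x => (if p.2 = (g p.1).1 then c ^ 2 * relu x ^ 2 else 1)
          * (if p.2 = (g p.1).2 then relu x ^ 2 else 1))).trans ?_
      rw [Finset.prod_congr rfl
        (fun p _ => integral_ite_relu2 (c ^ 2) (p.2 = (g p.1).1) (p.2 = (g p.1).2)),
        Fintype.prod_prod_type]
      exact Finset.prod_congr rfl fun ℓ _ => prod_ite_pair (c ^ 2) (g ℓ).1 (g ℓ).2
    rw [Finset.sum_congr rfl (fun g _ => hval g)]
    have hswap := Finset.prod_univ_sum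
      (fun _ : Fin (L - 1) => (Finset.univ : Finset (Fin n × Fin n)))
      (fun ℓ q => c ^ 2 * (if q.1 = q.2 then (3/2:ℝ) else 1/4))
    rw [Fintype.piFinset_univ] at hswap
    rw [← hswap]
    have hsum : ∀ ℓ : Fin (L - 1), (∑ q : Fin n × Fin n,
        (c ^ 2 * (if q.1 = q.2 then (3/2:ℝ) else 1/4)))
        = c ^ 2 * ((n:ℝ) * ((n:ℝ) * (1/4) + 5/4)) := fun _ => sum_pair n (c ^ 2)
    rw [Finset.prod_congr rfl (fun ℓ _ => hsum ℓ), Finset.prod_const, Finset.card_univ,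
      Fintype.card_fin, pow_mul, ← mul_pow]
    congr 1
    rw [hc]
    field_simp
    ring
end
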